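/- arXiv:math/0605276 — 2 statements merged into one kernel-verified Lean document; each statement's English description precedes it below -/
import Mathlib

section
/- For three points a, b, c of the circle S¹ = ℝ/ℤ say that (a,b,c) is positively oriented if there exist lifts ã, b̃, c̃ ∈ ℝ of a, b, c with ã < b̃ < c̃ < ã + 1, negatively oriented if (a,c,b) is positively oriented, and degenerate if the three points are not pairwise distinct; write ω(a,b,c) = +1, −1, 0 accordingly. Then for tuples x = (x₁,…,x_n) and y = (y₁,…,y_n) in (S¹)ⁿ the following are equivalent: (i) there exists an orientation-preserving homeomorphism h of S¹ with h(x_i) = y_i for all i = 1,…,n; (ii) for all indices i, j one has x_i = x_j if and only if y_i = y_j, and for all indices i, j, k one has ω(x_i, x_j, x_k) = ω(y_i, y_j, y_k). -/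
noncomputable section

open MeasureTheory Set Function
open scoped ENNReal

/-- The group of self-homeomorphisms of a topological space, under composition. -/
instance homeoGroup {X : Type*} [TopologicalSpace X] : Group (X ≃ₜ X) where
  mul f g := g.trans f
  one := Homeomorph.refl X
  inv := Homeomorph.symm
  mul_assoc f g h := rfl
  one_mul f := by ext x; rfl
  mul_one f := by ext x; rfl
  inv_mul_cancel f := by ext x; exact f.symm_apply_apply x

@[simp] lemma homeo_mul_apply {X : Type*} [TopologicalSpace X] (f g : X ≃ₜ X) (x : X) :
    (f * g) x = f (g x) := rfl

/-- The circle `S¹ = ℝ/ℤ`. -/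
abbrev Circle' := UnitAddCircle

/-- A homeomorphism of the circle `ℝ/ℤ` is orientation-preserving if it lifts to a strictly
increasing homeomorphism `F` of `ℝ` with `F (x + 1) = F x + 1`. -/
def IsOrientationPreserving (h : Circle' ≃ₜ Circle') : Prop :=
  ∃ F : ℝ ≃ₜ ℝ, StrictMono F ∧ (∀ x : ℝ, F (x + 1) = F x + 1) ∧
    ∀ x : ℝ, h (x : Circle') = ((F x : ℝ) : Circle')

/-- An action on the circle is minimal and strongly proximal if every proper closed subset
can be moved inside any nonempty open subset by some group element. -/
def IsMinimalStronglyProximal {Γ : Type*} [Group Γ] (ρ : Γ →* (Circle' ≃ₜ Circle')) : Prop :=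
  ∀ K : Set Circle', IsClosed K → K ≠ Set.univ → ∀ U : Set Circle', IsOpen U → U.Nonempty →
    ∃ γ : Γ, (ρ γ) '' K ⊆ U

/-- `(a, b, c)` is positively oriented on `S¹ = ℝ/ℤ` if there are lifts `x < y < z < x + 1`. -/
def PositivelyOriented (a b c : Circle') : Prop :=
  ∃ x y z : ℝ, (x : Circle') = a ∧ (y : Circle') = b ∧ (z : Circle') = c ∧
    x < y ∧ y < z ∧ z < x + 1

open Classical in
/-- The orientation cocycle `ω` on triples of points of the circle: `+1` for positively
oriented triples, `−1` for negatively oriented ones, `0` for degenerate ones. -/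
def orient (a b c : Circle') : ℤ :=
  if PositivelyOriented a b c then 1 else if PositivelyOriented a c b then -1 else 0

/-!
An orientation-preserving homeomorphism lifts to an increasing map of `ℝ` commuting with
`t ↦ t + 1`, so it preserves positively oriented triples and hence `orient`. Conversely, list the
distinct points of `x` by lifts `a₀ < ⋯ < aₘ < a₀ + 1`. Equality of the orientation cocycles
forces the lifts of the corresponding points of `y` taken in `[b₀, b₀ + 1)` to be increasing as
well. Extending both lists to bi-infinite increasing sequences with `a (k + m + 1) = a k + 1`, the
piecewise affine interpolation between them is an increasing bijection of `ℝ` commuting with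
`t ↦ t + 1`, and it descends to the required homeomorphism of the circle.
-/

namespace PiecewiseLinear

variable {A B : ℤ → ℝ} {k : ℤ} {t : ℝ}

lemma eq_of_mem_Ico (hA : Monotone A) {j : ℤ} (hj : t ∈ Ico (A j) (A (j + 1)))
    (hk : t ∈ Ico (A k) (A (k + 1))) : j = k := by
  by_contra hne
  rcases lt_or_gt_of_ne hne with h | h
  · linarith [hA (show j + 1 ≤ k by omega), hj.2, hk.1]
  · linarith [hA (show k + 1 ≤ j by omega), hj.1, hk.2]

lemma exists_mem_Ico (hA : Monotone A) {k₀ k₁ : ℤ} (h₀ : A k₀ ≤ t) (h₁ : t < A k₁) :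
    ∃ k, t ∈ Ico (A k) (A (k + 1)) := by
  have hbdd : ∀ z, A z ≤ t → z ≤ k₁ := fun z hz => by
    by_contra! h
    linarith [hA h.le]
  obtain ⟨k, hk, hmax⟩ := Int.exists_greatest_of_bdd ⟨k₁, hbdd⟩ ⟨k₀, h₀⟩
  refine ⟨k, hk, lt_of_not_ge fun h => ?_⟩
  linarith [hmax (k + 1) h]

lemma add_mul_of_add_one {p : ℤ} (hper : ∀ k, A (k + p) = A k + 1) (k q : ℤ) :
    A (k + q * p) = A k + q := by
  induction q using Int.induction_on with
  | zero => simp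
  | succ q ih => rw [show k + (q + 1) * p = k + q * p + p by ring, hper, ih]; push_cast; ring
  | pred q ih =>
    have := hper (k + (-q - 1) * p)
    rw [show k + (-q - 1) * p + p = k + -q * p by ring, ih] at this
    push_cast at this ⊢
    linarith

lemma exists_mem_Ico_of_add_one (hA : Monotone A) {p : ℤ} (hper : ∀ k, A (k + p) = A k + 1)
    (t : ℝ) : ∃ k, t ∈ Ico (A k) (A (k + 1)) := by
  set q := ⌊t - A 0⌋
  have hq := add_mul_of_add_one hper 0
  refine exists_mem_Ico hA (k₀ := q * p) (k₁ := (q + 1) * p) ?_ ?_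
  · rw [← zero_add (q * p), hq]; linarith [Int.floor_le (t - A 0)]
  · rw [← zero_add ((q + 1) * p), hq]; push_cast; linarith [Int.lt_floor_add_one (t - A 0)]

def pieceIndex (A : ℤ → ℝ) (t : ℝ) : ℤ :=
  Classical.epsilon fun k => t ∈ Ico (A k) (A (k + 1))

lemma pieceIndex_eq (hA : Monotone A) (ht : t ∈ Ico (A k) (A (k + 1))) : pieceIndex A t = k :=
  eq_of_mem_Ico hA (Classical.epsilon_spec (p := fun k => t ∈ Ico (A k) (A (k + 1))) ⟨k, ht⟩) ht

def interpolate (A B : ℤ → ℝ) (t : ℝ) : ℝ :=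
  let k := pieceIndex A t
  B k + (B (k + 1) - B k) / (A (k + 1) - A k) * (t - A k)

lemma interpolate_eq (hA : Monotone A) (ht : t ∈ Ico (A k) (A (k + 1))) :
    interpolate A B t = B k + (B (k + 1) - B k) / (A (k + 1) - A k) * (t - A k) := by
  rw [interpolate, pieceIndex_eq hA ht]

lemma interpolate_apply (hA : StrictMono A) (k : ℤ) : interpolate A B (A k) = B k := by
  rw [interpolate_eq hA.monotone ⟨le_rfl, hA (lt_add_one k)⟩]
  simp

lemma interpolate_mem_Ico (hA : StrictMono A) (hB : StrictMono B)
    (ht : t ∈ Ico (A k) (A (k + 1))) : interpolate A B t ∈ Ico (B k) (B (k + 1)) := by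
  have hlen : 0 < A (k + 1) - A k := sub_pos.mpr (hA (lt_add_one k))
  have hslope : 0 < (B (k + 1) - B k) / (A (k + 1) - A k) :=
    div_pos (sub_pos.mpr (hB (lt_add_one k))) hlen
  rw [interpolate_eq hA.monotone ht]
  constructor
  · nlinarith [ht.1]
  · have : (B (k + 1) - B k) / (A (k + 1) - A k) * (t - A k) < B (k + 1) - B k := by
      rw [div_mul_eq_mul_div, div_lt_iff₀ hlen]
      nlinarith [ht.2, hB (lt_add_one k)]
    linarith

lemma interpolate_strictMono (hA : StrictMono A) (hB : StrictMono B)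
    (hAcov : ∀ t, ∃ k, t ∈ Ico (A k) (A (k + 1))) : StrictMono (interpolate A B) := by
  intro s t hst
  obtain ⟨j, hs⟩ := hAcov s
  obtain ⟨k, ht⟩ := hAcov t
  have hjk : j ≤ k := by
    by_contra! h
    linarith [hA.monotone (show k + 1 ≤ j by omega), hs.1, ht.2]
  rcases hjk.lt_or_eq with hlt | rfl
  · calc interpolate A B s < B (j + 1) := (interpolate_mem_Ico hA hB hs).2
      _ ≤ B k := hB.monotone (by omega)
      _ ≤ interpolate A B t := (interpolate_mem_Ico hA hB ht).1
  · rw [interpolate_eq hA.monotone hs, interpolate_eq hA.monotone ht]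
    have hslope : 0 < (B (j + 1) - B j) / (A (j + 1) - A j) :=
      div_pos (sub_pos.mpr (hB (lt_add_one j))) (sub_pos.mpr (hA (lt_add_one j)))
    nlinarith

lemma interpolate_interpolate (hA : StrictMono A) (hB : StrictMono B)
    (hBcov : ∀ t, ∃ k, t ∈ Ico (B k) (B (k + 1))) (v : ℝ) :
    interpolate A B (interpolate B A v) = v := by
  obtain ⟨k, hv⟩ := hBcov v
  rw [interpolate_eq hA.monotone (interpolate_mem_Ico hB hA hv), interpolate_eq hB.monotone hv]
  have hA' : A (k + 1) - A k ≠ 0 := (sub_pos.mpr (hA (lt_add_one k))).ne'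
  have hB' : B (k + 1) - B k ≠ 0 := (sub_pos.mpr (hB (lt_add_one k))).ne'
  field_simp
  ring

lemma interpolate_add_one (hA : Monotone A) {p : ℤ} (hAper : ∀ k, A (k + p) = A k + 1)
    (hBper : ∀ k, B (k + p) = B k + 1) (t : ℝ) :
    interpolate A B (t + 1) = interpolate A B t + 1 := by
  obtain ⟨k, ht⟩ := exists_mem_Ico_of_add_one hA hAper t
  have ht' : t + 1 ∈ Ico (A (k + p)) (A (k + p + 1)) := by
    rw [add_right_comm, hAper, hAper]
    exact ⟨by linarith [ht.1], by linarith [ht.2]⟩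
  rw [interpolate_eq hA ht', interpolate_eq hA ht, add_right_comm, hAper, hAper, hBper, hBper]
  ring

end PiecewiseLinear

section PeriodicExtension

open scoped Fin.IntCast

variable {m : ℕ} (a : Fin (m + 1) → ℝ)

def periodicExt (k : ℤ) : ℝ := a k + (k / (m + 1 : ℤ) : ℤ)

lemma Fin.val_intCast_eq_emod (k : ℤ) : (((k : Fin (m + 1)) : ℕ) : ℤ) = k % (m + 1 : ℤ) := by
  rw [Fin.val_intCast, Int.toNat_of_nonneg (Int.emod_nonneg _ (by omega))]
  push_cast
  rfl

lemma periodicExt_natCast (i : Fin (m + 1)) : periodicExt a (i : ℕ) = a i := by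
  have hdiv : ((i : ℕ) : ℤ) / (m + 1 : ℤ) = 0 := Int.ediv_eq_zero_of_lt (by omega) (by omega)
  have hcast : (((i : ℕ) : ℤ) : Fin (m + 1)) = i := by
    ext
    rw [← Nat.cast_inj (R := ℤ), Fin.val_intCast_eq_emod, Int.emod_eq_of_lt (by omega) (by omega)]
  simp [periodicExt, hcast, hdiv]

lemma periodicExt_add_period (k : ℤ) : periodicExt a (k + (m + 1 : ℤ)) = periodicExt a k + 1 := by
  have hcast : ((k + (m + 1 : ℤ) : ℤ) : Fin (m + 1)) = (k : Fin (m + 1)) := by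
    ext
    rw [← Nat.cast_inj (R := ℤ), Fin.val_intCast_eq_emod, Fin.val_intCast_eq_emod,
      ← Int.emod_eq_add_self_emod]
  have hdiv : (k + (m + 1 : ℤ)) / (m + 1 : ℤ) = k / (m + 1 : ℤ) + 1 := by
    simpa using Int.add_mul_ediv_right k 1 (by omega : (m + 1 : ℤ) ≠ 0)
  simp only [periodicExt, hcast, hdiv]
  push_cast
  ring

lemma periodicExt_strictMono (ha : StrictMono a) (ha1 : ∀ i, a i < a 0 + 1) :
    StrictMono (periodicExt a) := by
  intro k l hkl
  have hquot : k / (m + 1 : ℤ) ≤ l / (m + 1 : ℤ) := Int.ediv_le_ediv (by omega) hkl.le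
  rcases hquot.lt_or_eq with hlt | heq
  · have hlt' : ((k / (m + 1 : ℤ) : ℤ) : ℝ) + 1 ≤ (l / (m + 1 : ℤ) : ℤ) := by exact_mod_cast hlt
    have hk := ha1 k
    have hl := ha.monotone (Fin.zero_le (l : Fin (m + 1)))
    simp only [periodicExt]
    linarith
  · have hk := Int.mul_ediv_add_emod k (m + 1)
    have hl := Int.mul_ediv_add_emod l (m + 1)
    have hrem : (k : Fin (m + 1)) < l := by
      rw [Fin.lt_def, ← Nat.cast_lt (α := ℤ), Fin.val_intCast_eq_emod,
        Fin.val_intCast_eq_emod]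
      rw [heq] at hk
      linarith
    simp only [periodicExt, heq]
    linarith [ha hrem]

end PeriodicExtension

lemma PositivelyOriented.lt_of_lifts {A B C : Circle'} (h : PositivelyOriented A B C)
    {p q r : ℝ} (hp : (p : Circle') = A) (hq : (q : Circle') = B) (hr : (r : Circle') = C)
    (hqI : q ∈ Ioo p (p + 1)) (hrI : r ∈ Ioo p (p + 1)) : q < r := by
  obtain ⟨p', q', r', rfl, rfl, rfl, hpq, hqr, hrp⟩ := h
  -- `p - p'` is an integer, so translating the witnesses by it keeps them lifts of `B` and `C`
  have hshift : ∀ s : ℝ, ((s + (p - p') : ℝ) : Circle') = s := fun s => by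
    rw [AddCircle.coe_add, AddCircle.coe_sub, hp, sub_self, add_zero]
  have hq' : q = q' + (p - p') := (AddCircle.coe_eq_coe_iff_of_mem_Ico (Ioo_subset_Ico_self hqI)
    ⟨by linarith, by linarith⟩).mp (by rw [hq, hshift])
  have hr' : r = r' + (p - p') := (AddCircle.coe_eq_coe_iff_of_mem_Ico (Ioo_subset_Ico_self hrI)
    ⟨by linarith, by linarith⟩).mp (by rw [hr, hshift])
  linarith

lemma positivelyOriented_of_lt {p q r : ℝ} (hpq : p < q) (hqr : q < r) (hrp : r < p + 1) :
    PositivelyOriented p q r :=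
  ⟨p, q, r, rfl, rfl, rfl, hpq, hqr, hrp⟩

lemma orient_eq_one_iff {A B C : Circle'} : orient A B C = 1 ↔ PositivelyOriented A B C := by
  unfold orient
  split_ifs <;> simp_all

namespace IsOrientationPreserving

variable {h : Circle' ≃ₜ Circle'}

lemma refl : IsOrientationPreserving (Homeomorph.refl Circle') :=
  ⟨Homeomorph.refl ℝ, strictMono_id, fun _ => rfl, fun _ => rfl⟩

lemma symm (hh : IsOrientationPreserving h) : IsOrientationPreserving h.symm := by
  obtain ⟨F, hmono, hper, hlift⟩ := hh
  refine ⟨F.symm, ?_, fun t => F.injective ?_, fun t => h.injective ?_⟩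
  · exact fun s t hst => hmono.lt_iff_lt.mp (by rwa [F.apply_symm_apply, F.apply_symm_apply])
  · rw [hper, F.apply_symm_apply, F.apply_symm_apply]
  · rw [h.apply_symm_apply, hlift, F.apply_symm_apply]

lemma positivelyOriented (hh : IsOrientationPreserving h) {A B C : Circle'}
    (hABC : PositivelyOriented A B C) : PositivelyOriented (h A) (h B) (h C) := by
  obtain ⟨F, hmono, hper, hlift⟩ := hh
  obtain ⟨p, q, r, rfl, rfl, rfl, hpq, hqr, hrp⟩ := hABC
  rw [hlift, hlift, hlift]
  exact positivelyOriented_of_lt (hmono hpq) (hmono hqr) (hper p ▸ hmono hrp)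

lemma positivelyOriented_iff (hh : IsOrientationPreserving h) {A B C : Circle'} :
    PositivelyOriented (h A) (h B) (h C) ↔ PositivelyOriented A B C := by
  refine ⟨fun hABC => ?_, hh.positivelyOriented⟩
  simpa using hh.symm.positivelyOriented hABC

lemma orient_eq (hh : IsOrientationPreserving h) (A B C : Circle') :
    orient (h A) (h B) (h C) = orient A B C := by
  have hABC := hh.positivelyOriented_iff (A := A) (B := B) (C := C)
  have hACB := hh.positivelyOriented_iff (A := A) (B := C) (C := B)
  unfold orient
  split_ifs <;> tauto

end IsOrientationPreserving

lemma exists_isOrientationPreserving_of_orderIso (F : ℝ ≃o ℝ) (hF : ∀ t, F (t + 1) = F t + 1) :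
    ∃ h : Circle' ≃ₜ Circle', IsOrientationPreserving h ∧ ∀ t : ℝ, h t = F t := by
  have hF' : ∀ t, F.symm (t + 1) = F.symm t + 1 := fun t => F.injective (by simp [hF])
  have hper : Function.Periodic (fun t => ((F t : ℝ) : Circle')) 1 := fun t => by
    simp only [hF, AddCircle.coe_add_period]
  have hper' : Function.Periodic (fun t => ((F.symm t : ℝ) : Circle')) 1 := fun t => by
    simp only [hF', AddCircle.coe_add_period]
  let h : Circle' ≃ₜ Circle' :=
    { toFun := hper.lift
      invFun := hper'.lift
      left_inv := fun z => QuotientAddGroup.induction_on z fun t => by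
        simp [Function.Periodic.lift_coe]
      right_inv := fun z => QuotientAddGroup.induction_on z fun t => by
        simp [Function.Periodic.lift_coe]
      continuous_toFun := (continuous_quotient_mk'.comp F.continuous).quotient_liftOn' _
      continuous_invFun := (continuous_quotient_mk'.comp F.symm.continuous).quotient_liftOn' _ }
  exact ⟨h, ⟨F.toHomeomorph, F.strictMono, hF, fun t => rfl⟩, fun t => rfl⟩

lemma exists_strictMono_lift {m : ℕ} (v : Fin (m + 1) → Circle') (hv : Injective v)
    (hpo : ∀ i j : Fin (m + 1), 0 < i → i < j → PositivelyOriented (v 0) (v i) (v j)) :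
    ∃ b : Fin (m + 1) → ℝ, StrictMono b ∧ (∀ i, b i < b 0 + 1) ∧ ∀ i, (b i : Circle') = v i := by
  obtain ⟨c, hc⟩ := QuotientAddGroup.mk_surjective (v 0)
  let b i : ℝ := AddCircle.equivIco 1 c (v i)
  have hb_mem : ∀ i, b i ∈ Ico c (c + 1) := fun i => (AddCircle.equivIco 1 c (v i)).2
  have hb_coe : ∀ i, (b i : Circle') = v i := fun i => AddCircle.coe_equivIco
  have hb0 : b 0 = c :=
    (AddCircle.coe_eq_coe_iff_of_mem_Ico (hb_mem 0) ⟨le_rfl, by linarith⟩).mp (by rw [hb_coe, hc])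
  have hb_pos : ∀ i, 0 < i → b i ∈ Ioo c (c + 1) := fun i hi =>
    ⟨(hb_mem i).1.lt_of_ne fun h => hi.ne' (hv (by rw [← hb_coe, ← h, hc])), (hb_mem i).2⟩
  refine ⟨b, fun i j hij => ?_, fun i => hb0 ▸ (hb_mem i).2, hb_coe⟩
  rcases (Fin.zero_le i).lt_or_eq with hi | rfl
  · exact (hpo i j hi hij).lt_of_lifts hc (hb_coe i) (hb_coe j) (hb_pos i hi)
      (hb_pos j (hi.trans hij))
  · exact hb0 ▸ (hb_pos j hij).1

open PiecewiseLinear in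
lemma exists_isOrientationPreserving_of_strictMono {m : ℕ} {a b : Fin (m + 1) → ℝ}
    (ha : StrictMono a) (ha1 : ∀ i, a i < a 0 + 1) (hb : StrictMono b) (hb1 : ∀ i, b i < b 0 + 1) :
    ∃ h : Circle' ≃ₜ Circle', IsOrientationPreserving h ∧ ∀ i, h (a i) = b i := by
  have hA := periodicExt_strictMono a ha ha1
  have hB := periodicExt_strictMono b hb hb1
  have hBcov := exists_mem_Ico_of_add_one hB.monotone (periodicExt_add_period b)
  let F : ℝ ≃o ℝ := (interpolate_strictMono hA hB
      (exists_mem_Ico_of_add_one hA.monotone (periodicExt_add_period a))).orderIsoOfSurjective _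
    fun v => ⟨_, interpolate_interpolate hA hB hBcov v⟩
  obtain ⟨h, hh, hlift⟩ := exists_isOrientationPreserving_of_orderIso F
    (interpolate_add_one hA.monotone (periodicExt_add_period a) (periodicExt_add_period b))
  refine ⟨h, hh, fun i => ?_⟩
  rw [hlift]
  change ((interpolate _ _ (a i) : ℝ) : Circle') = b i
  rw [← periodicExt_natCast a i, interpolate_apply hA, periodicExt_natCast]

lemma exists_sorted_representatives {n : ℕ} (x : Fin n → Circle') (hn : n ≠ 0) :
    ∃ (m : ℕ) (a : Fin (m + 1) → ℝ) (rep : Fin (m + 1) → Fin n), StrictMono a ∧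
      (∀ i, a i < a 0 + 1) ∧ (∀ i, (a i : Circle') = x (rep i)) ∧ ∀ j, ∃ i, x j = x (rep i) := by
  classical
  let L : Circle' → ℝ := fun z => AddCircle.equivIco 1 0 z
  have hL : ∀ z, (L z : Circle') = z := fun z => AddCircle.coe_equivIco
  have hL_mem : ∀ z, L z ∈ Ico (0 : ℝ) 1 := fun z => by simpa using (AddCircle.equivIco 1 0 z).2
  let T : Finset ℝ := Finset.univ.image (L ∘ x)
  have hT : T.Nonempty := Finset.univ_nonempty_iff.mpr ⟨⟨0, Nat.pos_of_ne_zero hn⟩⟩ |>.image _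
  obtain ⟨m, hm⟩ := Nat.exists_eq_succ_of_ne_zero hT.card_pos.ne'
  let a := T.orderEmbOfFin hm
  choose rep hrep using fun i => Finset.mem_image.mp (T.orderEmbOfFin_mem hm i)
  refine ⟨m, a, rep, a.strictMono, fun i => ?_, fun i => by rw [← (hrep i).2, comp_apply, hL],
    fun j => ?_⟩
  · rw [← (hrep i).2, ← (hrep 0).2, comp_apply, comp_apply]
    linarith [(hL_mem (x (rep i))).2, (hL_mem (x (rep 0))).1]
  · obtain ⟨i, hi⟩ : L (x j) ∈ Set.range a := by
      rw [Finset.range_orderEmbOfFin]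
      exact Finset.mem_image_of_mem _ (Finset.mem_univ j)
    refine ⟨i, ?_⟩
    rw [← hL (x j), ← hi, ← (hrep i).2, comp_apply, hL]

/-- Two `n`-tuples of points of the circle lie in the same `Homeo₊(S¹)`-orbit if and only if
they have the same coincidence pattern and the same orientation cocycle. -/
theorem statement17 (n : ℕ) (x y : Fin n → Circle') :
    (∃ h : Circle' ≃ₜ Circle', IsOrientationPreserving h ∧ ∀ i, h (x i) = y i) ↔
      ((∀ i j, x i = x j ↔ y i = y j) ∧
        ∀ i j k, orient (x i) (x j) (x k) = orient (y i) (y j) (y k)) := by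
  constructor
  · rintro ⟨h, hh, hxy⟩
    refine ⟨fun i j => ?_, fun i j k => ?_⟩
    · rw [← hxy i, ← hxy j, h.injective.eq_iff]
    · rw [← hxy i, ← hxy j, ← hxy k, hh.orient_eq]
  rintro ⟨hco, hor⟩
  rcases eq_or_ne n 0 with rfl | hn
  · exact ⟨_, .refl, finZeroElim⟩
  obtain ⟨m, a, rep, ha, ha1, hax, hrep⟩ := exists_sorted_representatives x hn
  have hinj : Injective (y ∘ rep) := fun i j hij => ha.injective <|
    (AddCircle.coe_eq_coe_iff_of_mem_Ico (a := a 0) ⟨ha.monotone (Fin.zero_le i), ha1 i⟩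
      ⟨ha.monotone (Fin.zero_le j), ha1 j⟩).mp (by rw [hax, hax]; exact (hco _ _).mpr hij)
  have hpo : ∀ i j, 0 < i → i < j → PositivelyOriented (y (rep 0)) (y (rep i)) (y (rep j)) :=
    fun i j hi hij => by
      rw [← orient_eq_one_iff, ← hor, orient_eq_one_iff, ← hax, ← hax, ← hax]
      exact positivelyOriented_of_lt (ha hi) (ha hij) (ha1 j)
  obtain ⟨b, hb, hb1, hby⟩ := exists_strictMono_lift _ hinj hpo
  obtain ⟨h, hh, hab⟩ := exists_isOrientationPreserving_of_strictMono ha ha1 hb hb1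
  refine ⟨h, hh, fun j => ?_⟩
  obtain ⟨i, hi⟩ := hrep j
  rw [hi, ← hax, hab, hby, comp_apply, (hco _ _).mp hi.symm]
end
end

section
/- Let M₁ be a locally compact, second countable Hausdorff topological space and M₂ a Polish space. On the space C(M₁, M₂) of continuous maps from M₁ to M₂, the Borel σ-algebra generated by the compact-open topology coincides with the σ-algebra generated by the evaluation maps ev_p : f ↦ f(p) for p ∈ M₁ (equivalently, with the Borel σ-algebra of the topology of pointwise convergence). -/
/-!
As `M₁` is locally compact and second countable, `C(M₁, M₂)` is second countable, so its Borel
σ-algebra is generated by the subbasic open sets `{f | f '' K ⊆ U}`. Each of them is a countable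
union of countable intersections of sets `{f | f x ∈ W}` with `W` open. Indeed, cover `U` by the
countably many basic sets `V` with `closure V ⊆ U` (possible since `M₂` is regular). If
`f '' K ⊆ U`, finitely many of these cover `f '' K`, hence `f D` for a countable `D ⊆ K` dense
in `K`. Conversely, if `f D` lies in a finite union `W` of such `V`, then by continuity
`f '' K ⊆ f '' closure D ⊆ closure W ⊆ U`, the last step because the union is finite.
-/

open MeasureTheory Set TopologicalSpace

theorem exists_countable_subset_subset_closure {X : Type*} [TopologicalSpace X]
    [SecondCountableTopology X] (K : Set X) : ∃ D ⊆ K, D.Countable ∧ K ⊆ closure D := by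
  obtain ⟨s, hs, hdense⟩ := exists_countable_dense K
  exact ⟨(↑) '' s, Subtype.coe_image_subset K s, hs.image _, Subtype.dense_iff.1 hdense⟩

namespace TopologicalSpace.IsTopologicalBasis

variable {X Y : Type*} [TopologicalSpace X] [TopologicalSpace Y] [RegularSpace Y]
  {B : Set (Set Y)} {U : Set Y}

theorem sUnion_setOf_closure_subset (hB : IsTopologicalBasis B) (hU : IsOpen U) :
    ⋃₀ {V ∈ B | closure V ⊆ U} = U := by
  refine Subset.antisymm (sUnion_subset fun V hV => subset_closure.trans hV.2) fun y hy => ?_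
  obtain ⟨V, hVB, hyV, hVU⟩ := hB.exists_closure_subset (hU.mem_nhds hy)
  exact ⟨V, ⟨hVB, hVU⟩, hyV⟩

theorem mapsTo_iff_exists_finite (hB : IsTopologicalBasis B) {f : X → Y} (hf : Continuous f)
    {K D : Set X} (hK : IsCompact K) (hDK : D ⊆ K) (hKD : K ⊆ closure D) (hU : IsOpen U) :
    MapsTo f K U ↔ ∃ F ⊆ {V ∈ B | closure V ⊆ U}, F.Finite ∧ MapsTo f D (⋃₀ F) := by
  constructor
  · intro hfKU
    rw [mapsTo_iff_image_subset, ← hB.sUnion_setOf_closure_subset hU, sUnion_eq_biUnion]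
      at hfKU
    obtain ⟨F, hFsub, hFfin, hcover⟩ :=
      (hK.image hf).elim_finite_subcover_image (fun V hV => hB.isOpen hV.1) hfKU
    refine ⟨F, hFsub, hFfin, fun x hx => ?_⟩
    rw [sUnion_eq_biUnion]
    exact hcover (mem_image_of_mem f (hDK hx))
  · rintro ⟨F, hFsub, hFfin, hfD⟩
    have hclosure : closure (⋃₀ F) ⊆ U := by
      rw [hFfin.closure_sUnion]
      exact iUnion₂_subset fun V hV => (hFsub hV).2
    exact ((hfD.closure hf).mono_left hKD).mono_right hclosure

end TopologicalSpace.IsTopologicalBasis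

namespace ContinuousMap

variable {X Y : Type*} [TopologicalSpace X] [TopologicalSpace Y] [RegularSpace Y]
  [SecondCountableTopology X] [SecondCountableTopology Y] {m : MeasurableSpace C(X, Y)}

theorem measurableSet_setOf_mapsTo (h : ∀ x, Measurable[m, borel Y] fun f : C(X, Y) => f x)
    {K : Set X} (hK : IsCompact K) {U : Set Y} (hU : IsOpen U) :
    MeasurableSet[m] {f : C(X, Y) | MapsTo f K U} := by
  obtain ⟨D, hDK, hDc, hKD⟩ := exists_countable_subset_subset_closure K
  set T := {V ∈ countableBasis Y | closure V ⊆ U}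
  have hT : T.Countable := (countable_countableBasis Y).mono fun V hV => hV.1
  have hunion : {f : C(X, Y) | MapsTo f K U} =
      ⋃ F ∈ {F | F ⊆ T ∧ F.Finite}, ⋂ x ∈ D, (fun f : C(X, Y) => f x) ⁻¹' ⋃₀ F := by
    ext f
    simp only [mem_ofPred_eq, mem_iUnion, mem_iInter, exists_prop, and_assoc, mem_preimage]
    exact (isBasis_countableBasis Y).mapsTo_iff_exists_finite f.continuous hK hDK hKD hU
  rw [hunion]
  refine .biUnion ((countable_ofPred_finite_subset hT).mono fun _ => And.symm)
    fun F hF => .biInter hDc fun x _ => h x ?_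
  exact MeasurableSpace.measurableSet_generateFrom
    (isOpen_sUnion fun V hV => isOpen_of_mem_countableBasis (hF.1 hV).1)

theorem borel_le_of_measurable_eval [LocallyCompactSpace X]
    (h : ∀ x, Measurable[m, borel Y] fun f : C(X, Y) => f x) :
    borel C(X, Y) ≤ m := by
  rw [borel_eq_generateFrom_of_subbasis compactOpen_eq]
  refine MeasurableSpace.generateFrom_le ?_
  rintro _ ⟨K, hK, U, hU, rfl⟩
  exact measurableSet_setOf_mapsTo h hK hU

end ContinuousMap

theorem statement19_general (M₁ M₂ : Type*) [TopologicalSpace M₁] [LocallyCompactSpace M₁]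
    [SecondCountableTopology M₁]
    [TopologicalSpace M₂] [PolishSpace M₂] :
    borel C(M₁, M₂) =
      ⨆ p : M₁, MeasurableSpace.comap (fun f : C(M₁, M₂) => f p) (borel M₂) :=
  le_antisymm
    (ContinuousMap.borel_le_of_measurable_eval fun p =>
      measurable_iff_comap_le.2 <|
        le_iSup (fun p => MeasurableSpace.comap (fun f : C(M₁, M₂) => f p) (borel M₂)) p)
    (iSup_le fun p => (continuous_eval_const p).borel_measurable.comap_le)

/-- On the space `C(M₁, M₂)` of continuous maps from a locally compact second countable
Hausdorff space `M₁` to a Polish space `M₂`, the Borel σ-algebra of the compact-open topology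
coincides with the σ-algebra generated by the evaluation maps `f ↦ f p`, `p ∈ M₁` (that is,
with the Borel σ-algebra of the topology of pointwise convergence). -/
theorem statement19 (M₁ M₂ : Type*) [TopologicalSpace M₁] [LocallyCompactSpace M₁]
    [SecondCountableTopology M₁] [T2Space M₁]
    [TopologicalSpace M₂] [PolishSpace M₂] :
    borel C(M₁, M₂) =
      ⨆ p : M₁, MeasurableSpace.comap (fun f : C(M₁, M₂) => f p) (borel M₂) :=
  statement19_general M₁ M₂
end
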